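/- Let 1 < α < 2 and n ≥ 1. Then ∑_{k=0}^{n} g_k^α ≤ 1/(n^α · Γ(1-α)) < 0, and moreover ∑_{k=0}^{n} g_k^α = −∑_{k=n+1}^{∞} g_k^α, where the tail series converges. (Note that Γ(1-α) < 0 for 1 < α < 2.) -/

import Mathlib

/-- Grünwald–Letnikov coefficient `g_k^α = (-1)^k * binom(α,k)`. -/
noncomputable def gl (a : ℝ) (k : ℕ) : ℝ :=
  (-1 : ℝ) ^ k * (∏ j ∈ Finset.range k, (a - j)) / (Nat.factorial k : ℝ)

/-- Shifted Grünwald weights. -/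
noncomputable def glw (a : ℝ) : ℕ → ℝ
  | 0 => a / 2 * gl a 0
  | (k+1) => a / 2 * gl a (k+1) + (2 - a) / 2 * gl a k

/-- Second-order Lubich coefficients `l_m^{2,γ}`. -/
noncomputable def lub2 (g : ℝ) (m : ℕ) : ℝ :=
  (3/2 : ℝ) ^ g * ∑ k ∈ Finset.range (m+1), (1/3 : ℝ) ^ k * gl g k * gl g (m - k)

/-- The Toeplitz matrix `B_α` of size `(M-1) × (M-1)`. -/
noncomputable def Bmat (a : ℝ) (M : ℕ) : Matrix (Fin (M-1)) (Fin (M-1)) ℝ :=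
  fun i j => if (j : ℕ) ≤ (i : ℕ) + 1 then glw a ((i : ℕ) + 1 - (j : ℕ)) else 0

/-- The symmetric matrix `A_α = B_α + B_αᵀ`. -/
noncomputable def Amat (a : ℝ) (M : ℕ) : Matrix (Fin (M-1)) (Fin (M-1)) ℝ :=
  Bmat a M + (Bmat a M).transpose

/-!
Pascal's rule `g_{k+1}^α = g_{k+1}^{α-1} - g_k^{α-1}` telescopes the partial sums to
`∑_{k ≤ n} g_k^α = g_n^{α-1} = Γ(n + 1 - α) / (Γ(1 - α) n!)`. Log-convexity of `Γ` (Gautschi's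
inequality) gives `n! ≤ Γ(n + 1 - α) n^α`, and `Γ(1 - α) < 0` turns this into the upper bound.
For the tail, `g_k^α ≥ 0` for `k ≥ 2`, and its partial sums are `g_{n+J}^{α-1} - g_n^{α-1}`,
where `g_m^{α-1} → 0` because `-(α - 1) ≤ m g_m^{α-1} ≤ 0`.
-/

open Filter Topology Finset

namespace Real

theorem Gamma_add_nat_eq_prod_mul_Gamma {s : ℝ} (hs : ∀ m : ℕ, s ≠ -m) (n : ℕ) :
    Gamma (s + n) = (∏ j ∈ range n, (s + j)) * Gamma s := by
  induction n with
  | zero => simp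
  | succ n ih =>
    have hsn : s + n ≠ 0 := fun h => hs n (by linarith)
    rw [Nat.cast_succ, ← add_assoc, Gamma_add_one hsn, ih, prod_range_succ]
    ring

theorem Gamma_neg_of_neg_one_lt_of_neg {s : ℝ} (h1 : -1 < s) (h2 : s < 0) : Gamma s < 0 := by
  have h : 0 < s * Gamma s := Gamma_add_one h2.ne ▸ Gamma_pos_of_pos (by linarith)
  exact neg_of_mul_pos_right h h2.le

/-- One half of Gautschi's inequality, from the log-convexity of `Γ` between `x` and `x + 1`. -/
theorem Gamma_add_le_Gamma_mul_rpow {x t : ℝ} (hx : 0 < x) (ht0 : 0 < t) (ht1 : t < 1) :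
    Gamma (x + t) ≤ Gamma x * x ^ t := by
  have hΓ := Gamma_pos_of_pos hx
  have h := Gamma_mul_add_mul_le_rpow_Gamma_mul_rpow_Gamma (s := x) (t := x + 1) hx (by linarith)
    (sub_pos.2 ht1) ht0 (sub_add_cancel 1 t)
  rwa [show (1 - t) * x + t * (x + 1) = x + t by ring, Gamma_add_one hx.ne',
    mul_rpow hx.le hΓ.le, ← mul_assoc, mul_right_comm, ← rpow_add hΓ, sub_add_cancel,
    rpow_one] at h

theorem Gamma_add_one_le_Gamma_sub_mul_rpow {x t : ℝ} (ht0 : 0 < t) (ht1 : t < 1) (hx : t < x) :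
    Gamma (x + 1) ≤ Gamma (x - t) * x ^ (t + 1) := by
  have hxt : 0 < x - t := sub_pos.2 hx
  have hx0 : 0 < x := ht0.trans hx
  calc Gamma (x + 1) = x * Gamma (x - t + t) := by rw [sub_add_cancel, Gamma_add_one hx0.ne']
    _ ≤ x * (Gamma (x - t) * x ^ t) := by
      gcongr
      calc Gamma (x - t + t) ≤ Gamma (x - t) * (x - t) ^ t :=
            Gamma_add_le_Gamma_mul_rpow hxt ht0 ht1
        _ ≤ Gamma (x - t) * x ^ t :=
            mul_le_mul_of_nonneg_left (rpow_le_rpow hxt.le (by linarith) ht0.le)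
              (Gamma_pos_of_pos hxt).le
    _ = Gamma (x - t) * x ^ (t + 1) := by rw [rpow_add_one hx0.ne']; ring

end Real

theorem gl_succ (a : ℝ) (k : ℕ) : gl a (k + 1) = (k - a) / (k + 1) * gl a k := by
  have hk : ((k : ℝ) + 1) ≠ 0 := by positivity
  have hfac : (k.factorial : ℝ) ≠ 0 := by positivity
  simp only [gl, prod_range_succ, Nat.factorial_succ, Nat.cast_mul, Nat.cast_succ]
  field_simp
  ring

theorem gl_one (a : ℝ) : gl a 1 = -a := by
  simp [gl]

theorem gl_succ_eq_sub (a : ℝ) (k : ℕ) : gl a (k + 1) = gl (a - 1) (k + 1) - gl (a - 1) k := by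
  have hk : ((k : ℝ) + 1) ≠ 0 := by positivity
  have hfac : (k.factorial : ℝ) ≠ 0 := by positivity
  have hshift : ∏ j ∈ range (k + 1), (a - j) = a * ∏ j ∈ range k, (a - 1 - j) := by
    rw [prod_range_succ']
    simp only [Nat.cast_succ, Nat.cast_zero, sub_zero, sub_add_eq_sub_sub_swap, mul_comm]
  simp only [gl, hshift, prod_range_succ, Nat.factorial_succ, Nat.cast_mul, Nat.cast_succ]
  field_simp
  ring

theorem sum_range_succ_gl (a : ℝ) (n : ℕ) : ∑ k ∈ range (n + 1), gl a k = gl (a - 1) n := by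
  induction n with
  | zero => simp [gl]
  | succ n ih => rw [sum_range_succ, ih, gl_succ_eq_sub]; ring

theorem gl_eq_Gamma_div {a : ℝ} (ha : ∀ m : ℕ, a ≠ m) (n : ℕ) :
    gl a n = Real.Gamma (n - a) / (Real.Gamma (-a) * n.factorial) := by
  have hs : ∀ m : ℕ, -a ≠ -m := fun m h => ha m (neg_inj.1 h)
  have hΓ : Real.Gamma (-a) ≠ 0 := Real.Gamma_ne_zero hs
  have hprod : (-1 : ℝ) ^ n * ∏ j ∈ range n, (a - j) = ∏ j ∈ range n, (-a + j) := by
    have h := prod_neg (s := range n) fun j => a - j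
    rw [card_range] at h
    rw [← h]
    exact prod_congr rfl fun j _ => by ring
  rw [show (n : ℝ) - a = -a + n by ring, Real.Gamma_add_nat_eq_prod_mul_Gamma hs, gl, hprod]
  field_simp

theorem gl_sub_one_eq_Gamma_div {α : ℝ} (hα1 : 1 < α) (hα2 : α < 2) (n : ℕ) :
    gl (α - 1) n = Real.Gamma (n + 1 - α) / (Real.Gamma (1 - α) * n.factorial) := by
  have ha : ∀ m : ℕ, α - 1 ≠ m := by
    intro m h
    rcases Nat.eq_zero_or_pos m with rfl | hm
    · rw [Nat.cast_zero] at h; linarith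
    · have : (1 : ℝ) ≤ m := by exact_mod_cast hm
      linarith
  rw [gl_eq_Gamma_div ha, neg_sub, sub_sub_eq_add_sub]

theorem gl_sub_one_le {α : ℝ} (hα1 : 1 < α) (hα2 : α < 2) {n : ℕ} (hn : 1 ≤ n) :
    gl (α - 1) n ≤ 1 / ((n : ℝ) ^ α * Real.Gamma (1 - α)) := by
  have hn' : (1 : ℝ) ≤ n := by exact_mod_cast hn
  have hG : Real.Gamma (1 - α) < 0 :=
    Real.Gamma_neg_of_neg_one_lt_of_neg (by linarith) (by linarith)
  have hN : 0 < (n : ℝ) ^ α := by positivity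
  have hF : 0 < (n.factorial : ℝ) := by positivity
  have key : (n.factorial : ℝ) ≤ Real.Gamma (n + 1 - α) * (n : ℝ) ^ α := by
    have h := Real.Gamma_add_one_le_Gamma_sub_mul_rpow (x := n) (t := α - 1)
      (by linarith) (by linarith) (by linarith)
    rwa [sub_add_cancel, sub_sub_eq_add_sub, Real.Gamma_nat_eq_factorial] at h
  rw [gl_sub_one_eq_Gamma_div hα1 hα2]
  calc Real.Gamma (n + 1 - α) / (Real.Gamma (1 - α) * n.factorial)
      = Real.Gamma (n + 1 - α) * (n : ℝ) ^ α / (Real.Gamma (1 - α) * n.factorial * (n : ℝ) ^ α) :=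
        (mul_div_mul_right _ _ hN.ne').symm
    _ ≤ n.factorial / (Real.Gamma (1 - α) * n.factorial * (n : ℝ) ^ α) :=
        div_le_div_of_nonpos_of_le (by nlinarith [mul_neg_of_neg_of_pos hG hF]) key
    _ = 1 / ((n : ℝ) ^ α * Real.Gamma (1 - α)) := by field_simp

theorem gl_nonpos {b : ℝ} (hb0 : 0 ≤ b) (hb1 : b ≤ 1) {m : ℕ} (hm : 1 ≤ m) : gl b m ≤ 0 := by
  induction m, hm using Nat.le_induction with
  | base => simpa [gl_one] using hb0
  | succ m hm ih =>
    have hm' : (1 : ℝ) ≤ m := by exact_mod_cast hm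
    rw [gl_succ]
    exact mul_nonpos_of_nonneg_of_nonpos (div_nonneg (by linarith) (by linarith)) ih

theorem neg_le_mul_gl {b : ℝ} (hb0 : 0 ≤ b) (hb1 : b ≤ 1) {m : ℕ} (hm : 1 ≤ m) :
    -b ≤ m * gl b m := by
  induction m, hm using Nat.le_induction with
  | base => simp [gl_one]
  | succ m hm ih =>
    have hm' : (1 : ℝ) ≤ m := by exact_mod_cast hm
    have hstep : ((m + 1 : ℕ) : ℝ) * gl b (m + 1) = (m - b) * gl b m := by
      rw [gl_succ]
      push_cast
      field_simp
    rw [hstep]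
    nlinarith [gl_nonpos hb0 hb1 hm]

theorem tendsto_gl {b : ℝ} (hb0 : 0 ≤ b) (hb1 : b ≤ 1) : Tendsto (gl b) atTop (𝓝 0) := by
  refine tendsto_of_tendsto_of_tendsto_of_le_of_le' (tendsto_const_div_atTop_nhds_zero_nat (-b))
    tendsto_const_nhds ?_ ?_ <;> filter_upwards [eventually_ge_atTop 1] with m hm
  · have hm' : (0 : ℝ) < m := by exact_mod_cast hm
    rw [div_le_iff₀ hm', mul_comm]
    exact neg_le_mul_gl hb0 hb1 hm
  · exact gl_nonpos hb0 hb1 hm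

theorem gl_pos {α : ℝ} (hα1 : 1 < α) (hα2 : α < 2) {k : ℕ} (hk : 2 ≤ k) : 0 < gl α k := by
  induction k, hk using Nat.le_induction with
  | base =>
    have h : 0 < (α - 1) * α := by nlinarith
    rw [gl_succ, gl_one]
    push_cast
    linarith
  | succ k hk ih =>
    have hk' : (2 : ℝ) ≤ k := by exact_mod_cast hk
    rw [gl_succ]
    exact mul_pos (div_pos (by linarith) (by linarith)) ih

theorem hasSum_gl_tail {a : ℝ} {n : ℕ} (hpos : ∀ k, n < k → 0 ≤ gl a k)
    (hlim : Tendsto (gl (a - 1)) atTop (𝓝 0)) :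
    HasSum (fun j => gl a (n + 1 + j)) (-∑ k ∈ range (n + 1), gl a k) := by
  rw [hasSum_iff_tendsto_nat_of_nonneg fun j => hpos _ (by omega), sum_range_succ_gl]
  have hpartial : ∀ J,
      ∑ j ∈ range J, gl a (n + 1 + j) = gl (a - 1) (J + n) - gl (a - 1) (0 + n) := by
    intro J
    rw [← sum_range_sub (fun i => gl (a - 1) (i + n))]
    refine sum_congr rfl fun j _ => ?_
    rw [show n + 1 + j = j + n + 1 by omega, gl_succ_eq_sub, add_right_comm j n 1]
  simp only [hpartial, zero_add]
  simpa using (hlim.comp (tendsto_add_atTop_nat n)).sub_const (gl (a - 1) n)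

theorem stmt2 (α : ℝ) (hα1 : 1 < α) (hα2 : α < 2) (n : ℕ) (hn : 1 ≤ n) :
    (∑ k ∈ Finset.range (n+1), gl α k) ≤ 1 / ((n : ℝ) ^ α * Real.Gamma (1 - α)) ∧
    1 / ((n : ℝ) ^ α * Real.Gamma (1 - α)) < 0 ∧
    HasSum (fun j : ℕ => gl α (n + 1 + j)) (-(∑ k ∈ Finset.range (n+1), gl α k)) := by
  have hn' : (1 : ℝ) ≤ n := by exact_mod_cast hn
  refine ⟨?_, ?_, hasSum_gl_tail (fun k hk => (gl_pos hα1 hα2 (k := k) (by omega)).le)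
    (tendsto_gl (by linarith) (by linarith))⟩
  · exact (sum_range_succ_gl α n).trans_le (gl_sub_one_le hα1 hα2 hn)
  · exact one_div_neg.2 (mul_neg_of_pos_of_neg (by positivity)
      (Real.Gamma_neg_of_neg_one_lt_of_neg (by linarith) (by linarith)))
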